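/- arXiv:1805.05700 — 2 statements merged into one kernel-verified Lean document; each statement's English description precedes it below -/
import Mathlib

section
/- (Mayer expansion, single type) There exist constants c>0 and C>0 such that for all k>1, α∈(3/4,1] and z>0 with z k² ≤ c, and for every bounded measurable set S⊂ℝ³ and every type q∈{1,2,3}, the single-type partition function Z^q(S) is positive and satisfies |log Z^q(S) − 2z|S|| ≤ C z²k²|S|, i.e. log Z^q(S) = 2|S| z (1 + O(z k²)). -/
open MeasureTheory Filter

attribute [local instance] Classical.propDecidable

noncomputable section

/-! ## Basic geometry of hard plates -/

/-- a point of `ℝ³` -/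
abbrev Pt : Type := Fin 3 → ℝ

/-- an orientation: a type `i ∈ {1,2,3}` together with one of the two
assignments (`a` = `true`, `b` = `false`) of the sides `k^α` and `k`
to the two axes orthogonal to `i` -/
abbrev Orient : Type := Fin 3 × Bool

/-- a plate: a center together with an orientation -/
abbrev Plate : Type := Pt × Orient

/-- a block index in `ℤ³` -/
abbrev I3 : Type := Fin 3 → ℤ

/-- the side length, along the coordinate axis `j`, of a `1 × k^α × k` plate
with orientation `o`: side `1` along the axis `o.1`, and sides `k^α`, `k`
along the two other axes, in one of the two possible ways according to `o.2`. -/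
def sideLen (k α : ℝ) (o : Orient) (j : Fin 3) : ℝ :=
  if j = o.1 then 1
  else if j = o.1 + 1 then (if o.2 then k ^ α else k)
  else if o.2 then k else k ^ α

/-- the support `R_p` of a plate: the closed axis-aligned box centered at the
center of the plate, with side lengths `1, k^α, k` as prescribed by its orientation -/
def plSupport (k α : ℝ) (p : Plate) : Set Pt :=
  {y | ∀ j, |y j - p.1 j| ≤ sideLen k α p.2 j / 2}

/-- two plates intersect if their supports do -/
def Intersects (k α : ℝ) (p p' : Plate) : Prop :=
  (plSupport k α p ∩ plSupport k α p').Nonempty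

/-- hard-core pair interaction `φ(p,p')` -/
def phi2 (k α : ℝ) (p p' : Plate) : ℝ := if Intersects k α p p' then 0 else 1

/-- hard-core factor `φ(p_1,…,p_n) = ∏_{i<j} φ(p_i,p_j)` of a finite plate
configuration, given as a list -/
def phiL (k α : ℝ) : List Plate → ℝ
  | [] => 1
  | p :: ps => (ps.map (fun p' => phi2 k α p p')).prod * phiL k α ps

/-- hard-core interaction between two configurations -/
def crossL (k α : ℝ) (P Q : List Plate) : ℝ :=
  (P.map (fun p => (Q.map (fun p' => phi2 k α p p')).prod)).prod

/-- the plate configuration built from centers `x` and orientations `o` -/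
def mkConf {n : ℕ} (x : Fin n → Pt) (o : Fin n → Orient) : List Plate :=
  List.ofFn (fun m => (x m, o m))

/-- the Ursell function `φ^T(p_1,…,p_n)`: the sum over connected graphs on the
`n` labelled vertices (encoded by their edge sets, listed with `e.1 < e.2`) of
`∏_{{j,j'} ∈ E(g)} (φ(p_j,p_{j'}) - 1)`.  It equals `1` for `n = 1` and
vanishes for `n = 0`. -/
def ursell (k α : ℝ) {n : ℕ} (p : Fin n → Plate) : ℝ :=
  ∑ E : Finset (Fin n × Fin n),
    if (∀ e ∈ E, e.1 < e.2) ∧ (SimpleGraph.fromRel (fun i j => (i, j) ∈ E)).Connected then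
      ∏ e ∈ E, (phi2 k α (p e.1) (p e.2) - 1)
    else 0

/-- the two orientations of type `q` -/
def typeOrients (q : Fin 3) : Finset Orient := {(q, true), (q, false)}

/-! ## Partition functions of uniform systems -/

/-- grand-canonical partition function at activity `z` of plates with centers
in `S` and orientations in the finite set `O`:
`1 + ∑_{n≥1} (z^n/n!) ∫_{S^n} ∑_{orientations} φ(p_1,…,p_n)`
(the `n = 0` term of the series equals `1`). -/
def ZGen (k α z : ℝ) (S : Set Pt) (O : Finset Orient) : ℝ :=
  ∑' n : ℕ, (z ^ n / (Nat.factorial n : ℝ)) *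
    ∫ x : Fin n → Pt in Set.univ.pi (fun _ => S),
      ∑ o : Fin n → {a // a ∈ O}, phiL k α (mkConf x (fun m => (o m).1))

/-- partition function of plate configurations in `S` containing at least two
plates of different types -/
def Zge2 (k α z : ℝ) (S : Set Pt) : ℝ :=
  ∑' n : ℕ, (z ^ n / (Nat.factorial n : ℝ)) *
    ∫ x : Fin n → Pt in Set.univ.pi (fun _ => S),
      ∑ o : Fin n → Orient,
        (if ∃ i j : Fin n, (o i).1 ≠ (o j).1 then phiL k α (mkConf x o) else 0)

/-- the closed axis-aligned cube with center `c` and side `s` -/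
def cube (c : Pt) (s : ℝ) : Set Pt := {y | ∀ j, |y j - c j| ≤ s / 2}

/-- partition function of plate configurations with centers in `A ∪ B`, all
plates with center in `A` being of type `i` and all other plates of type `j` -/
def Zpair (k α z : ℝ) (i j : Fin 3) (A B : Set Pt) : ℝ :=
  ∑' n : ℕ, (z ^ n / (Nat.factorial n : ℝ)) *
    ∫ x : Fin n → Pt in Set.univ.pi (fun _ => A ∪ B),
      ∑ b : Fin n → Bool,
        phiL k α (mkConf x (fun m => ((if x m ∈ A then i else j), b m)))

/-- `Z^{≥2}(Δ₁ ∪ Δ₂)` for a dipole: sum over pairs of distinct types -/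
def Zdip (k α z : ℝ) (A B : Set Pt) : ℝ :=
  ∑ i : Fin 3, ∑ j : Fin 3, if i ≠ j then Zpair k α z i j A B else 0

/-! ## Pebbles -/

/-- the pebble with index `v` in the cube of corner `c` paved by cubes of
side `k^α/2` -/
def pebbleBox (k α : ℝ) {M : ℕ} (c : Pt) (v : Fin 3 → Fin M) : Set Pt :=
  {y | ∀ j, c j + (k ^ α / 2) * ((v j : ℕ) : ℝ) ≤ y j ∧
            y j ≤ c j + (k ^ α / 2) * (((v j : ℕ) : ℝ) + 1)}

/-- a pebble is typical of type `i` if it contains the centers of at least two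
plates of `P` of type `i` with different orientations -/
def TypicalIn (k α : ℝ) {M : ℕ} (c : Pt) (P : Finset Plate) (v : Fin 3 → Fin M)
    (i : Fin 3) : Prop :=
  ∃ p ∈ P, ∃ p' ∈ P, p.2 ≠ p'.2 ∧ p.2.1 = i ∧ p'.2.1 = i ∧
    p.1 ∈ pebbleBox k α c v ∧ p'.1 ∈ pebbleBox k α c v

/-- a pebble is atypical if it does not contain the centers of two plates of
`P` with different orientations -/
def AtypicalIn (k α : ℝ) {M : ℕ} (c : Pt) (P : Finset Plate) (v : Fin 3 → Fin M) : Prop :=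
  ¬ ∃ p ∈ P, ∃ p' ∈ P, p.2 ≠ p'.2 ∧ p.1 ∈ pebbleBox k α c v ∧ p'.1 ∈ pebbleBox k α c v

/-! ## Blocks, spins and conditioned partition functions -/

/-- the index of the (half-open) block of side `l` containing `x` -/
def blockIdx (l : ℝ) (x : Pt) : I3 := fun j => ⌊x j / l⌋

/-- the region of `ℝ³` paved by the blocks of side `ℓ = k/2` with indices in `B` -/
def regionOf (k : ℝ) (B : Finset I3) : Set Pt := {x | blockIdx (k / 2) x ∈ B}

/-- the closed region paved by the blocks with indices in `Y` -/
def regionClosed (k : ℝ) (Y : Finset I3) : Set Pt :=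
  {x | ∃ ξ ∈ Y, ∀ j, (k / 2) * (ξ j : ℝ) ≤ x j ∧ x j ≤ (k / 2) * ((ξ j : ℝ) + 1)}

/-- the block `ξ` is within rescaled `L^∞`-distance `r` of the complement of `B` -/
def nearBoundary (B : Finset I3) (r : ℤ) (ξ : I3) : Prop :=
  ∃ η : I3, η ∉ B ∧ ∀ j, |ξ j - η j| ≤ r

/-- the spin value (in `{0,1,2,3,4}`) corresponding to the plate type `i` -/
def spinOfType (i : Fin 3) : Fin 5 := ⟨i.1 + 1, by have := i.isLt; omega⟩

/-- the weight of the block `ξ` carrying the spin `s` in the presence of the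
plate configuration `P`: empty blocks get weight `1`, `-2`, `0` for
`s ∈ {1,2,3}`, `s = 0`, `s = 4` respectively, and nonempty blocks enforce the
compatibility of the plates they contain with the spin `s`. -/
def blockWeightL (l : ℝ) (P : List Plate) (ξ : I3) (s : Fin 5) : ℝ :=
  if ∀ p ∈ P, blockIdx l p.1 ≠ ξ then
    (if s = 0 then -2 else if s = 4 then 0 else 1)
  else if s = 4 then
    (if ∃ p ∈ P, ∃ p' ∈ P, blockIdx l p.1 = ξ ∧ blockIdx l p'.1 = ξ ∧ p.2.1 ≠ p'.2.1
     then 1 else 0)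
  else if ∃ i : Fin 3, s = spinOfType i ∧ ∀ p ∈ P, blockIdx l p.1 = ξ → p.2.1 = i
    then 1 else 0

/-- total compatibility weight of a plate configuration with a spin configuration -/
def confWeightL (l : ℝ) (B : Finset I3) (σ : I3 → Fin 5) (P : List Plate) : ℝ :=
  ∏ ξ ∈ B, blockWeightL l P ξ (σ ξ)

/-- extension (by `0`) of a spin configuration on `B` to all of `ℤ³` -/
def extFn (B : Finset I3) (σ : {ξ // ξ ∈ B} → Fin 5) : I3 → Fin 5 :=
  fun ξ => if h : ξ ∈ B then σ ⟨ξ, h⟩ else 0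

/-- indicator of the `q`-boundary condition: the spin equals `q` on every block
within rescaled `L^∞`-distance `8` of the complement of `B` -/
def bcWeight (B : Finset I3) (q : Fin 3) (σ : {ξ // ξ ∈ B} → Fin 5) : ℝ :=
  if ∀ ξ : {ξ // ξ ∈ B}, nearBoundary B 8 ξ.1 → σ ξ = spinOfType q then 1 else 0

/-- the partition function with `q`-boundary conditions on the union `Λ` of the
blocks indexed by `B`, with plate centers restricted to `Λ ∖ V` and with the
additional hard-core constraint that plates must not intersect the plates of
the fixed configuration `Pc`:
`Z = ∑_{σ ∈ Θ^q} ∫_{Ω_Λ(σ)} dP φ(P) z^{|P|} ∏_{p ∈ P, p' ∈ Pc} φ(p,p')`. -/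
def ZBCgen (k α z : ℝ) (B : Finset I3) (V : Set Pt) (q : Fin 3) (Pc : List Plate) : ℝ :=
  ∑ σ : {ξ // ξ ∈ B} → Fin 5,
    bcWeight B q σ *
      ∑' n : ℕ, (z ^ n / (Nat.factorial n : ℝ)) *
        ∫ x : Fin n → Pt in Set.univ.pi (fun _ => regionOf k B \ V),
          ∑ o : Fin n → Orient,
            confWeightL (k / 2) B (extFn B σ) (mkConf x o) * phiL k α (mkConf x o) *
              crossL k α (mkConf x o) Pc

/-- the `n`-point correlation function with `q`-boundary conditions,
`ρ_n^{(q,Λ)}(p_1,…,p_n) = Z(Λ|q)^{-1} ∑_{σ∈Θ^q} ∫_{Ω_Λ(σ)} dP z^{|P|+n} φ((p_1,…,p_n) ∪ P)` -/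
def corrBC (k α z : ℝ) (B : Finset I3) (V : Set Pt) (q : Fin 3) (Ps : List Plate) : ℝ :=
  (ZBCgen k α z B V q [])⁻¹ * z ^ Ps.length * phiL k α Ps * ZBCgen k α z B V q Ps

/-- an increasing sequence of cubic boxes invading `ℝ³`, each consisting of
`(8(m+1)-2)³` blocks (so that `L + 2ℓ` is divisible by `8ℓ`) -/
def boxB0 (m : ℕ) : Finset I3 :=
  Finset.Icc (fun _ => -(4 * (m : ℤ) + 3)) (fun _ => 4 * (m : ℤ) + 2)

/-- the cubic box with `(8m-2)³` blocks, aligned with the lattice of smoothing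
cubes (which exceed it by one block on each side) -/
def boxBm (m : ℕ) : Finset I3 :=
  Finset.Icc (fun _ => (-1 : ℤ)) (fun _ => 8 * (m : ℤ) - 4)

/-- `ε = max{(zk²)^{c₁}, e^{-c₂ z k^{2+α}}}` -/
def epsParam (k α z c1 c2 : ℝ) : ℝ :=
  max ((z * k ^ 2) ^ c1) (Real.exp (-(c2 * z * k ^ (2 + α))))

/-! ## Contours -/

/-- `D`-adjacency of blocks: distinct and touching on a face, an edge or a corner -/
def adjD (ξ η : I3) : Prop := ξ ≠ η ∧ ∀ j, |ξ j - η j| ≤ 1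

/-- reachability within a set of blocks through `D`-adjacency steps -/
def ReachIn (S : Finset I3) (ξ η : I3) : Prop :=
  Relation.ReflTransGen (fun a b => a ∈ S ∧ b ∈ S ∧ adjD a b) ξ η

/-- a nonempty `D`-connected set of blocks -/
def DConn (S : Finset I3) : Prop := S.Nonempty ∧ ∀ ξ ∈ S, ∀ η ∈ S, ReachIn S ξ η

/-- `Γ` is a `D`-connected component of `S` -/
def IsDComponent (S Γ : Finset I3) : Prop :=
  Γ ⊆ S ∧ DConn Γ ∧ ∀ ξ ∈ Γ, ∀ η ∈ S, adjD ξ η → η ∈ Γ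

/-- two sets of blocks are `D`-disconnected -/
def DDisj (A B : Finset I3) : Prop := ∀ ξ ∈ A, ∀ η ∈ B, ξ ≠ η ∧ ¬ adjD ξ η

/-- the combinatorial datum of a contour: its support (a set of blocks) and its
spin configuration (normalized to `0` outside the support) -/
structure Skeleton where
  Γ : Finset I3
  σ : I3 → Fin 5

/-- the blocks of the smoothing cube (of side `8ℓ`) with index `a` -/
def smoothBlocks (a : I3) : Finset I3 :=
  Finset.Icc (fun j => 8 * a j - 2) (fun j => 8 * a j + 5)

/-- the index of the smoothing cube containing the block `η` -/
def smoothIdx (η : I3) : I3 := fun j => Int.fdiv (η j + 2) 8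

/-- the sampling cube `S_ξ` (the `8` blocks `η` with `η j - ξ j ∈ {0,1}`) is
good: all its spins are equal and lie in `{1,2,3}` -/
def sampGood (B : Finset I3) (σ : I3 → Fin 5) (ξ : I3) : Prop :=
  ∃ i : Fin 3, ∀ η ∈ B, (∀ j, η j = ξ j ∨ η j = ξ j + 1) → σ η = spinOfType i

/-- the union `B(σ)` of the bad sampling cubes -/
def badBlocks (B : Finset I3) (σ : I3 → Fin 5) : Finset I3 :=
  B.filter (fun η => ∃ ξ ∈ B, ¬ sampGood B σ ξ ∧ ∀ j, η j = ξ j ∨ η j = ξ j + 1)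

/-- the union `B_s(σ)` of the smoothing cubes intersecting `B(σ)` -/
def smoothedBad (B : Finset I3) (σ : I3 → Fin 5) : Finset I3 :=
  (badBlocks B σ).biUnion (fun η => smoothBlocks (smoothIdx η))

/-- the bad region `B̄(σ)`: `B_s(σ)` together with all blocks at rescaled
`L^∞`-distance `≤ 1` from it -/
def barB (B : Finset I3) (σ : I3 → Fin 5) : Finset I3 :=
  B.filter (fun ξ => ∃ η ∈ smoothedBad B σ, ∀ j, |ξ j - η j| ≤ 1)

/-- the exterior of `Γ` in `B`: the blocks of `B ∖ Γ` connected to the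
boundary layer of `B` -/
def extBlocks (B Γ : Finset I3) : Finset I3 :=
  (B \ Γ).filter (fun ξ => ∃ η ∈ B \ Γ, nearBoundary B 1 η ∧ ReachIn (B \ Γ) ξ η)

/-- the interiors of `Γ` in `B`: the connected components of `B ∖ Γ` not
touching the boundary of `B` -/
def interiorsSet (B Γ : Finset I3) : Set (Finset I3) :=
  {A | IsDComponent (B \ Γ) A ∧ ∀ ξ ∈ A, ¬ nearBoundary B 1 ξ}

/-- the internal magnetization of the contour `s` on the interior `A`: the
common type prescribed by the spins of `s` on the layer of `Γ` adjacent to `A` -/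
def intMag (s : Skeleton) (A : Finset I3) : Fin 3 :=
  if h : ∃ i : Fin 3, ∀ ξ ∈ s.Γ, (∃ η ∈ A, adjD ξ η) → s.σ ξ = spinOfType i
  then h.choose else 0

/-- the external magnetization of the contour `s` is `q` -/
def extMagIs (B : Finset I3) (s : Skeleton) (q : Fin 3) : Prop :=
  ∀ ξ ∈ s.Γ, (∃ η ∈ extBlocks B s.Γ, adjD ξ η) → s.σ ξ = spinOfType q

/-- the skeleton `s` is a possible contour in `Λ` (associated to the block set
`B`) with `q`-boundary conditions: it arises from a spin configuration
`τ ∈ Θ^q` admitting a compatible plate configuration, as a `D`-connected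
component of the bad region `B̄(τ)`, with matching spins. -/
def PossibleSkel (k α : ℝ) (B : Finset I3) (q : Fin 3) (s : Skeleton) : Prop :=
  (∀ ξ, ξ ∉ s.Γ → s.σ ξ = 0) ∧
  ∃ τ : I3 → Fin 5,
    (∀ ξ ∈ B, nearBoundary B 8 ξ → τ ξ = spinOfType q) ∧
    (∃ P : List Plate, (∀ p ∈ P, p.1 ∈ regionOf k B) ∧
       confWeightL (k / 2) B τ P * phiL k α P ≠ 0) ∧
    IsDComponent (barB B τ) s.Γ ∧ (∀ ξ ∈ s.Γ, s.σ ξ = τ ξ)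

/-- the sub-configuration of the plates of `P` belonging to `Γ` -/
def restrictConf (l : ℝ) (Γ : Finset I3) (P : List Plate) : List Plate :=
  P.filter (fun p => decide (blockIdx l p.1 ∈ Γ))

/-- the function `F_γ(P)` for the contour with support `Γ` and plate
configuration `Pγ`: equal to `1` if `P` contains a plate belonging to `Λ ∖ Γ`
and a plate belonging to `Γ`, or a plate belonging to `Ext Γ` intersecting a
plate of `Pγ`; `0` otherwise. -/
def FgamL (k α : ℝ) (B Γ : Finset I3) (Pγ PQ : List Plate) : ℝ :=
  if (∃ p1 ∈ PQ, ∃ p2 ∈ PQ, blockIdx (k / 2) p1.1 ∉ Γ ∧ blockIdx (k / 2) p2.1 ∈ Γ) ∨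
     (∃ p1 ∈ PQ, blockIdx (k / 2) p1.1 ∈ extBlocks B Γ ∧ ∃ p2 ∈ Pγ, Intersects k α p1 p2)
  then 1 else 0

/-- `∫_{Ω^q_Λ} dP φ^T(P) z^{|P|} F_γ(P)`, the exponent of the dressing factor
of the contour activity -/
def dressInt (k α z : ℝ) (B : Finset I3) (q : Fin 3) (Γ : Finset I3) (Pγ : List Plate) : ℝ :=
  ∑' n : ℕ, (z ^ (n + 1) / (Nat.factorial (n + 1) : ℝ)) *
    ∫ x : Fin (n + 1) → Pt in Set.univ.pi (fun _ => regionOf k B),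
      ∑ b : Fin (n + 1) → Bool,
        ursell k α (fun m => (x m, (q, b m))) *
          FgamL k α B Γ Pγ (mkConf x (fun m => (q, b m)))

/-- the activity `ζ_q^{(Λ)}(γ)` of the contour `γ = (Γ, σ_γ, Pγ)`:
`(z^{|Pγ|} φ(Pγ)/Z^q(Γ)) ∏_j (Z^{(γ)}(Int_j Γ|m^j)/Z(Int_j Γ|q)) e^{-∫ φ^T z^{|P|} F_γ}` -/
def zetaL (k α z : ℝ) (B : Finset I3) (q : Fin 3) (s : Skeleton) (Pγ : List Plate) : ℝ :=
  (z ^ Pγ.length * phiL k α Pγ / ZGen k α z (regionOf k s.Γ) (typeOrients q)) *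
  (∏ᶠ A ∈ interiorsSet B s.Γ,
     ZBCgen k α z A ∅ (intMag s A) Pγ / ZBCgen k α z A ∅ q []) *
  Real.exp (-(dressInt k α z B q s.Γ Pγ))

/-- `∑_{n≥2} ((-1)^n/n!) ∑*_{γ_1,…,γ_n ∈ ∂ distinct} F_{γ_1}(P) ⋯ F_{γ_n}(P)`,
where the plate configuration of each contour is the restriction of `Pfull` to
its support -/
def multiF (k α : ℝ) (B : Finset I3) (D : Finset Skeleton) (Pfull Pq : List Plate) : ℝ :=
  ∑ r ∈ Finset.range (D.card + 1),
    if 2 ≤ r then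
      ((-1 : ℝ) ^ r / (Nat.factorial r : ℝ)) *
        ∑ g : Fin r → {s // s ∈ D},
          (if Function.Injective g then
            ∏ i : Fin r,
              FgamL k α B (g i).1.Γ (restrictConf (k / 2) (g i).1.Γ Pfull) Pq
          else 0)
    else 0

/-- the multi-contour interaction `W^{(Λ)}(∂)` -/
def Wfun (k α z : ℝ) (B : Finset I3) (q : Fin 3) (D : Finset Skeleton)
    (Pfull : List Plate) : ℝ :=
  ∑' n : ℕ, (z ^ (n + 1) / (Nat.factorial (n + 1) : ℝ)) *
    ∫ x : Fin (n + 1) → Pt in Set.univ.pi (fun _ => regionOf k B),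
      ∑ b : Fin (n + 1) → Bool,
        ursell k α (fun m => (x m, (q, b m))) *
          multiF k α B D Pfull (mkConf x (fun m => (q, b m)))

/-- a collection of possible contours, with pairwise `D`-disconnected supports,
all of whose external magnetizations equal `q` -/
def GoodContourConfig (k α : ℝ) (B : Finset I3) (q : Fin 3) (D : Finset Skeleton) : Prop :=
  (∀ s ∈ D, PossibleSkel k α B q s ∧ extMagIs B s q) ∧
  (∀ s ∈ D, ∀ t ∈ D, s ≠ t → DDisj s.Γ t.Γ)

/-- the sum `∑_{∂ ∈ C(Λ,q)} (∏_{γ∈∂} ζ_q^{(Λ)}(γ)) e^{W^{(Λ)}(∂)}` over contour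
configurations, the sum including the integration over the plate
configurations inside the contour supports -/
def contourSum (k α z : ℝ) (B : Finset I3) (q : Fin 3) : ℝ :=
  ∑ᶠ D ∈ {D : Finset Skeleton | D.Nonempty ∧ GoodContourConfig k α B q D},
    ∑' n : ℕ, (1 / (Nat.factorial n : ℝ)) *
      ∫ x : Fin n → Pt in Set.univ.pi (fun _ => regionOf k (D.biUnion Skeleton.Γ)),
        ∑ o : Fin n → Orient,
          (∏ s ∈ D,
            confWeightL (k / 2) s.Γ s.σ (restrictConf (k / 2) s.Γ (mkConf x o)) *
              zetaL k α z B q s (restrictConf (k / 2) s.Γ (mkConf x o))) *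
            Real.exp (Wfun k α z B q D (mkConf x o))

/-! ## Polymers -/

/-- the single-contour part `K_{q,1}^{(Λ)}(X)` of the polymer activity -/
def K1 (k α z : ℝ) (B : Finset I3) (q : Fin 3) (X : Finset I3) : ℝ :=
  ∑ᶠ s ∈ {s : Skeleton | PossibleSkel k α B q s ∧ extMagIs B s q ∧ s.Γ = X},
    ∑' n : ℕ, (1 / (Nat.factorial n : ℝ)) *
      ∫ x : Fin n → Pt in Set.univ.pi (fun _ => regionOf k X),
        ∑ o : Fin n → Orient,
          confWeightL (k / 2) X s.σ (mkConf x o) * zetaL k α z B q s (mkConf x o)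

/-- `𝕀_Y(P)`: `Y` is the smallest `D`-connected union of blocks containing the
supports of all plates of `P` -/
def IndY (k α : ℝ) (Y : Finset I3) (P : List Plate) : ℝ :=
  if DConn Y ∧ (∀ p ∈ P, plSupport k α p ⊆ regionClosed k Y) ∧
      (∀ Y' : Finset I3, Y' ⊆ Y → DConn Y' →
        (∀ p ∈ P, plSupport k α p ⊆ regionClosed k Y') → Y' = Y)
  then 1 else 0

/-- the localized multi-contour interaction `F_∂(Y)` -/
def Fcal (k α z : ℝ) (B : Finset I3) (q : Fin 3) (D : Finset Skeleton)
    (Pfull : List Plate) (Y : Finset I3) : ℝ :=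
  ∑' n : ℕ, (z ^ (n + 1) / (Nat.factorial (n + 1) : ℝ)) *
    ∫ x : Fin (n + 1) → Pt in Set.univ.pi (fun _ => regionOf k B),
      ∑ b : Fin (n + 1) → Bool,
        ursell k α (fun m => (x m, (q, b m))) *
          multiF k α B D Pfull (mkConf x (fun m => (q, b m))) *
          IndY k α Y (mkConf x (fun m => (q, b m)))

/-- `∑_{p≥1} (1/p!) ∑*_{Y_1,…,Y_p ∈ 𝔅^T(X) distinct, ∪Y_j = X₁} ∏_j (e^{F_∂(Y_j)} - 1)` -/
def Ysum (k α z : ℝ) (B : Finset I3) (q : Fin 3) (D : Finset Skeleton)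
    (X X1 : Finset I3) (Pfull : List Plate) : ℝ :=
  ∑' p : ℕ, (1 / (Nat.factorial (p + 1) : ℝ)) *
    ∑ Ys : Fin (p + 1) → {A // A ∈ X.powerset},
      (if Function.Injective Ys ∧ (∀ i, DConn (Ys i).1) ∧
          Finset.univ.sup (fun i => (Ys i).1) = X1
       then ∏ i, (Real.exp (Fcal k α z B q D Pfull (Ys i).1) - 1)
       else 0)

/-- the multi-contour part `K_{q,≥2}^{(Λ)}(X)` of the polymer activity -/
def Kge2 (k α z : ℝ) (B : Finset I3) (q : Fin 3) (X : Finset I3) : ℝ :=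
  ∑ X0 ∈ X.powerset, ∑ X1 ∈ X.powerset,
    (if X0 ∪ X1 = X then (1 : ℝ) else 0) *
      ∑ᶠ D ∈ {D : Finset Skeleton | 2 ≤ D.card ∧ GoodContourConfig k α B q D ∧
                D.biUnion Skeleton.Γ = X0},
        ∑' n : ℕ, (1 / (Nat.factorial n : ℝ)) *
          ∫ x : Fin n → Pt in Set.univ.pi (fun _ => regionOf k X0),
            ∑ o : Fin n → Orient,
              (∏ s ∈ D,
                confWeightL (k / 2) s.Γ s.σ (restrictConf (k / 2) s.Γ (mkConf x o)) *
                  zetaL k α z B q s (restrictConf (k / 2) s.Γ (mkConf x o))) *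
                Ysum k α z B q D X X1 (mkConf x o)

/-- the polymer activity `K_q^{(Λ)}(X) = K_{q,1}^{(Λ)}(X) + K_{q,≥2}^{(Λ)}(X)` -/
def Kpoly (k α z : ℝ) (B : Finset I3) (q : Fin 3) (X : Finset I3) : ℝ :=
  K1 k α z B q X + Kge2 k α z B q X

/-- the polymers of `Λ`: the nonempty `D`-connected unions of blocks of `B` -/
def polymers (B : Finset I3) : Finset (Finset I3) :=
  B.powerset.filter (fun A => DConn A)

/-- hard-core polymer interaction: `1` if `D`-disconnected, `0` otherwise -/
def polyPhi2 (A B : Finset I3) : ℝ := if DDisj A B then 1 else 0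

/-- the polymer Ursell function `φ^T(X_1,…,X_r)` -/
def polyUrsell {r : ℕ} (Xs : Fin r → Finset I3) : ℝ :=
  ∑ E : Finset (Fin r × Fin r),
    if (∀ e ∈ E, e.1 < e.2) ∧ (SimpleGraph.fromRel (fun i j => (i, j) ∈ E)).Connected then
      ∏ e ∈ E, (polyPhi2 (Xs e.1) (Xs e.2) - 1)
    else 0

/-- `∫_{Ω_Γ(σ_γ)} dP_γ |ζ_q^{(Λ)}(γ)|` -/
def contourAbsInt (k α z : ℝ) (B : Finset I3) (q : Fin 3) (s : Skeleton) : ℝ :=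
  ∑' n : ℕ, (1 / (Nat.factorial n : ℝ)) *
    ∫ x : Fin n → Pt in Set.univ.pi (fun _ => regionOf k s.Γ),
      ∑ o : Fin n → Orient,
        |confWeightL (k / 2) s.Γ s.σ (mkConf x o) * zetaL k α z B q s (mkConf x o)|

/-- `∫_{Ω_Γ(σ_γ)} dP_γ z^{|P_γ|} φ(P_γ) / Z^q(Γ)` -/
def contourPlateWeight (k α z : ℝ) (q : Fin 3) (s : Skeleton) : ℝ :=
  (∑' n : ℕ, (z ^ n / (Nat.factorial n : ℝ)) *
    ∫ x : Fin n → Pt in Set.univ.pi (fun _ => regionOf k s.Γ),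
      ∑ o : Fin n → Orient,
        confWeightL (k / 2) s.Γ s.σ (mkConf x o) * phiL k α (mkConf x o)) /
  ZGen k α z (regionOf k s.Γ) (typeOrients q)

/-- the admissible regions `𝔉nt`: connected regions obtained from a union of
smoothing cubes by removing all blocks at rescaled `L^∞`-distance `1` from the
complement -/
def Fnt : Set (Finset I3) :=
  {B | ∃ A : Finset I3, A.Nonempty ∧
        B = (A.biUnion smoothBlocks).filter
              (fun ξ => ¬ nearBoundary (A.biUnion smoothBlocks) 1 ξ) ∧
        DConn B}

/-- the one-point function of the pure type-`q` plate gas in `S`: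
`Z^q(S)^{-1} ∫_{Ω^q_S} dP z^{|P|+1} φ({p₀} ∪ P)` -/
def corrPure (k α z : ℝ) (S : Set Pt) (q : Fin 3) (p₀ : Plate) : ℝ :=
  (ZGen k α z S (typeOrients q))⁻¹ *
    ∑' n : ℕ, (z ^ (n + 1) / (Nat.factorial n : ℝ)) *
      ∫ x : Fin n → Pt in Set.univ.pi (fun _ => S),
        ∑ b : Fin n → Bool, phiL k α (p₀ :: mkConf x (fun m => (q, b m)))

end

/-!
Write `Z = ∑ zⁿ/n! Iₙ`, where `Iₙ` integrates over `Sⁿ` the hard-core factor summed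
over the `2ⁿ` orientations. Since `Iₙ ≤ (2|S|)ⁿ`, `log Z ≤ 2z|S|`. Two plates of the
same type overlap only if their centers lie in a box of volume at most `8k²`, so a new
plate added to `n` given ones loses at most `16k²n` of the available volume `2|S|`:
`Iₙ₊₁ ≥ (2|S| - 16k²n) Iₙ`. With `L = 2|S|` and `a = 16k²` this gives
`Iₙ ≥ ∏_{m<n} (L - am)`, and the lower bound on `log Z` follows from this product alone:
for `az²L ≤ 1` through its second-order expansion `Lⁿ (1 - a·C(n,2)/L)`, which sums to
`(1 - az²L/2) e^{zL}`, and for `az²L > 1` through the binomial bound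
`Z ≥ (1 + za)^⌊L/a⌋`.
-/

open Finset

theorem Finset.one_sub_sum_one_sub_le_prod {ι : Type*} (s : Finset ι) {w : ι → ℝ}
    (h0 : ∀ i ∈ s, 0 ≤ w i) (h1 : ∀ i ∈ s, w i ≤ 1) :
    1 - ∑ i ∈ s, (1 - w i) ≤ ∏ i ∈ s, w i := by
  classical
  induction s using Finset.induction with
  | empty => simp
  | insert x s hx ih =>
    rw [prod_insert hx, sum_insert hx]
    have h0' := fun i hi => h0 i (mem_insert_of_mem hi)
    have h1' := fun i hi => h1 i (mem_insert_of_mem hi)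
    have := ih h0' h1'
    have := prod_le_one h0' h1'
    nlinarith [h0 x (mem_insert_self x s), h1 x (mem_insert_self x s)]

theorem Real.hasSum_pow_div_factorial (x : ℝ) :
    HasSum (fun n => x ^ n / (n.factorial : ℝ)) (Real.exp x) := by
  rw [Real.exp_eq_exp_ℝ]
  exact NormedSpace.expSeries_div_hasSum_exp x

theorem Real.hasSum_choose_two_mul_pow_div_factorial (x : ℝ) :
    HasSum (fun n => (n.choose 2 : ℝ) * x ^ n / (n.factorial : ℝ))
      (x ^ 2 / 2 * Real.exp x) := by
  rw [← hasSum_nat_add_iff' 2]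
  have hshift : ∀ n : ℕ, ((n + 2).choose 2 : ℝ) * x ^ (n + 2) / ((n + 2).factorial : ℝ) =
      x ^ 2 / 2 * (x ^ n / (n.factorial : ℝ)) := by
    intro n
    have h := Nat.choose_mul_factorial_mul_factorial (n := n + 2) (k := 2) (by omega)
    rw [Nat.add_sub_cancel] at h
    have hc : ((n + 2).choose 2 : ℝ) ≠ 0 := by exact_mod_cast (Nat.choose_pos (by omega)).ne'
    rw [← h]
    push_cast
    field_simp
    norm_num [Nat.factorial]
    ring
  simpa [hshift, Finset.sum_range_succ] using
    (Real.hasSum_pow_div_factorial x).mul_left (x ^ 2 / 2)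

theorem Real.sub_sq_le_log_one_add {x : ℝ} (hx : 0 ≤ x) : x - x ^ 2 ≤ Real.log (1 + x) := by
  have h := Real.one_sub_inv_le_log_of_pos (by linarith : 0 < 1 + x)
  have : (1 + x)⁻¹ ≤ 1 - x + x ^ 2 := by
    rw [inv_eq_one_div, div_le_iff₀ (by linarith)]
    nlinarith
  linarith

theorem Real.neg_two_mul_le_log_one_sub {v : ℝ} (hv0 : 0 ≤ v) (hv : v ≤ 1 / 2) :
    -(2 * v) ≤ Real.log (1 - v) := by
  have h := Real.one_sub_inv_le_log_of_pos (by linarith : 0 < 1 - v)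
  have : (1 - v)⁻¹ ≤ 1 + 2 * v := by
    rw [inv_eq_one_div, div_le_iff₀ (by linarith)]
    nlinarith
  linarith

/-- The estimates satisfied by the configuration integrals `I n` of a hard-core gas with
one-particle volume `L` in which every particle excludes a volume at most `a`. -/
structure HardCoreBounds (I : ℕ → ℝ) (L a : ℝ) : Prop where
  zero : I 0 = 1
  nonneg : ∀ n, 0 ≤ I n
  le_pow : ∀ n, I n ≤ L ^ n
  step : ∀ n, (L - a * n) * I n ≤ I (n + 1)

noncomputable def mayerSeries (I : ℕ → ℝ) (z : ℝ) : ℝ :=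
  ∑' n : ℕ, (z ^ n / (Nat.factorial n : ℝ)) * I n

namespace HardCoreBounds

variable {I : ℕ → ℝ} {L a z : ℝ}

theorem volume_nonneg (h : HardCoreBounds I L a) : 0 ≤ L := by
  simpa using (h.nonneg 1).trans (h.le_pow 1)

theorem pow_div_factorial_mul_le (h : HardCoreBounds I L a) (hz : 0 ≤ z) (n : ℕ) :
    z ^ n / (n.factorial : ℝ) * I n ≤ (z * L) ^ n / (n.factorial : ℝ) := by
  rw [mul_pow, mul_div_right_comm]
  exact mul_le_mul_of_nonneg_left (h.le_pow n) (by positivity)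

theorem summable (h : HardCoreBounds I L a) (hz : 0 ≤ z) :
    Summable fun n => z ^ n / (n.factorial : ℝ) * I n :=
  .of_nonneg_of_le (fun n => mul_nonneg (by positivity) (h.nonneg n))
    (h.pow_div_factorial_mul_le hz) (Real.summable_pow_div_factorial _)

theorem mayerSeries_le_exp (h : HardCoreBounds I L a) (hz : 0 ≤ z) :
    mayerSeries I z ≤ Real.exp (z * L) :=
  hasSum_le (h.pow_div_factorial_mul_le hz) (h.summable hz).hasSum
    (Real.hasSum_pow_div_factorial _)

theorem one_le_mayerSeries (h : HardCoreBounds I L a) (hz : 0 ≤ z) : 1 ≤ mayerSeries I z := by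
  simpa [mayerSeries, h.zero] using
    (h.summable hz).le_tsum 0 fun n _ => mul_nonneg (by positivity) (h.nonneg n)

theorem prod_sub_mul_le (h : HardCoreBounds I L a) :
    ∀ n : ℕ, (∀ m < n, a * m ≤ L) → ∏ m ∈ range n, (L - a * m) ≤ I n
  | 0, _ => by simp [h.zero]
  | n + 1, hn => by
    rw [prod_range_succ, mul_comm]
    calc (L - a * n) * ∏ m ∈ range n, (L - a * m)
        ≤ (L - a * n) * I n := by
          gcongr
          · linarith [hn n n.lt_succ_self]
          · exact h.prod_sub_mul_le n fun m hm => hn m (hm.trans n.lt_succ_self)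
      _ ≤ I (n + 1) := h.step n

theorem pow_mul_one_sub_le (h : HardCoreBounds I L a) (hL : 0 < L) (ha : 0 ≤ a) (n : ℕ) :
    L ^ n * (1 - a * n.choose 2 / L) ≤ I n := by
  have hsum : ∑ m ∈ range n, (m : ℝ) = n.choose 2 := by
    rw [Nat.choose_two_right, ← Finset.sum_range_id]
    push_cast
    rfl
  by_cases hn : ∀ m < n, a * m ≤ L
  · calc L ^ n * (1 - a * n.choose 2 / L)
        = L ^ n * (1 - ∑ m ∈ range n, (1 - (1 - a * m / L))) := by
          simp only [sub_sub_cancel, ← Finset.sum_div, ← Finset.mul_sum, hsum]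
      _ ≤ L ^ n * ∏ m ∈ range n, (1 - a * m / L) := by
          gcongr
          refine one_sub_sum_one_sub_le_prod _ (fun m hm => ?_) (fun m _ => ?_)
          · rw [sub_nonneg, div_le_one hL]
            exact hn m (mem_range.mp hm)
          · have : 0 ≤ a * m / L := by positivity
            linarith
      _ = ∏ m ∈ range n, (L - a * m) := by
          rw [show L ^ n = ∏ _m ∈ range n, L by simp, ← prod_mul_distrib]
          refine prod_congr rfl fun m _ => ?_
          field_simp
      _ ≤ I n := h.prod_sub_mul_le n hn
  · obtain ⟨m, hm, hLm⟩ : ∃ m < n, L < a * m := by simpa using hn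
    have hmC : (m : ℝ) ≤ n.choose 2 :=
      hsum ▸ single_le_sum (fun i _ => Nat.cast_nonneg i) (mem_range.mpr hm)
    have : 1 - a * n.choose 2 / L ≤ 0 := by
      rw [sub_nonpos, le_div_iff₀ hL]
      nlinarith
    exact (mul_nonpos_of_nonneg_of_nonpos (by positivity) this).trans (h.nonneg n)

theorem one_sub_mul_exp_le_mayerSeries (h : HardCoreBounds I L a) (hL : 0 < L) (ha : 0 ≤ a)
    (hz : 0 ≤ z) :
    (1 - a * z ^ 2 * L / 2) * Real.exp (z * L) ≤ mayerSeries I z := by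
  have hlow : HasSum (fun n => z ^ n / (n.factorial : ℝ) * (L ^ n * (1 - a * n.choose 2 / L)))
      ((1 - a * z ^ 2 * L / 2) * Real.exp (z * L)) := by
    have hterm : ∀ n : ℕ, z ^ n / (n.factorial : ℝ) * (L ^ n * (1 - a * n.choose 2 / L)) =
        (z * L) ^ n / (n.factorial : ℝ) - a / L * (n.choose 2 * (z * L) ^ n / n.factorial) := by
      intro n
      rw [mul_pow]
      field_simp
    rw [funext hterm, show (1 - a * z ^ 2 * L / 2) * Real.exp (z * L) =
      Real.exp (z * L) - a / L * ((z * L) ^ 2 / 2 * Real.exp (z * L)) by field_simp]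
    exact (Real.hasSum_pow_div_factorial _).sub
      ((Real.hasSum_choose_two_mul_pow_div_factorial _).mul_left _)
  exact hasSum_le (fun n => mul_le_mul_of_nonneg_left (h.pow_mul_one_sub_le hL ha n)
    (by positivity)) hlow (h.summable hz).hasSum

theorem pow_mul_descFactorial_le (h : HardCoreBounds I L a) (ha : 0 ≤ a) {N n : ℕ}
    (hN : a * N ≤ L) (hn : n ≤ N) : a ^ n * N.descFactorial n ≤ I n := by
  have hmN : ∀ m < n, a * m ≤ a * N := fun m hm => by gcongr; exact_mod_cast (hm.trans_le hn).le
  calc a ^ n * N.descFactorial n = ∏ m ∈ range n, a * ((N : ℝ) - m) := by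
        rw [Nat.descFactorial_eq_prod_range, prod_mul_distrib, prod_const, card_range,
          Nat.cast_prod]
        congr 1
        refine prod_congr rfl fun m hm => ?_
        rw [Nat.cast_sub (by linarith [mem_range.mp hm])]
    _ ≤ ∏ m ∈ range n, (L - a * m) := by
        refine prod_le_prod (fun m hm => ?_) (fun m _ => by linarith)
        have := hmN m (mem_range.mp hm)
        nlinarith
    _ ≤ I n := h.prod_sub_mul_le n fun m hm => (hmN m hm).trans hN

theorem one_add_pow_floor_le_mayerSeries (h : HardCoreBounds I L a) (ha : 0 < a) (hz : 0 ≤ z) :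
    (1 + z * a) ^ ⌊L / a⌋₊ ≤ mayerSeries I z := by
  set N := ⌊L / a⌋₊
  have hN : a * N ≤ L := by
    have := Nat.floor_le (div_nonneg h.volume_nonneg ha.le) (a := L / a)
    rw [le_div_iff₀ ha] at this
    linarith
  calc (1 + z * a) ^ N = ∑ n ∈ range (N + 1), (z * a) ^ n * N.choose n := by
        rw [add_comm, add_pow]
        simp
    _ ≤ ∑ n ∈ range (N + 1), z ^ n / (n.factorial : ℝ) * I n := by
        refine sum_le_sum fun n hn => ?_
        have hle := h.pow_mul_descFactorial_le ha.le hN (Nat.lt_succ_iff.mp (mem_range.mp hn))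
        rw [Nat.descFactorial_eq_factorial_mul_choose] at hle
        calc (z * a) ^ n * N.choose n
            = z ^ n / (n.factorial : ℝ) * (a ^ n * (n.factorial * N.choose n : ℕ)) := by
              push_cast
              field_simp
              ring
          _ ≤ z ^ n / (n.factorial : ℝ) * I n := by gcongr
    _ ≤ mayerSeries I z :=
        (h.summable hz).sum_le_tsum _ fun n _ => mul_nonneg (by positivity) (h.nonneg n)

theorem sub_le_log_mayerSeries_of_small (h : HardCoreBounds I L a) (hL : 0 < L) (ha : 0 ≤ a)
    (hz : 0 ≤ z) (hsmall : a * z ^ 2 * L ≤ 1) :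
    z * L - a * z ^ 2 * L ≤ Real.log (mayerSeries I z) := by
  have hu : 0 ≤ a * z ^ 2 * L / 2 := by positivity
  have hlog := Real.log_le_log (by have := Real.exp_pos (z * L); nlinarith)
    (h.one_sub_mul_exp_le_mayerSeries hL ha hz)
  rw [Real.log_mul (by linarith) (Real.exp_pos _).ne', Real.log_exp] at hlog
  linarith [Real.neg_two_mul_le_log_one_sub hu (by linarith)]

theorem sub_le_log_mayerSeries_of_large (h : HardCoreBounds I L a) (ha : 0 < a) (hz : 0 ≤ z)
    (hza : z * a ≤ 1) (hlarge : 1 < a * z ^ 2 * L) :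
    z * L - 2 * a * z ^ 2 * L ≤ Real.log (mayerSeries I z) := by
  have hN : L / a - 1 ≤ ⌊L / a⌋₊ := by linarith [Nat.lt_floor_add_one (L / a)]
  have hx : 0 ≤ z * a - (z * a) ^ 2 := by nlinarith [mul_nonneg hz ha.le]
  calc z * L - 2 * a * z ^ 2 * L ≤ (L / a - 1) * (z * a - (z * a) ^ 2) := by
        have : (L / a - 1) * (z * a - (z * a) ^ 2) =
            z * L - a * z ^ 2 * L - z * a + (z * a) ^ 2 := by
          field_simp
          ring
        nlinarith
    _ ≤ ⌊L / a⌋₊ * Real.log (1 + z * a) := by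
        gcongr
        exact Real.sub_sq_le_log_one_add (by positivity)
    _ = Real.log ((1 + z * a) ^ ⌊L / a⌋₊) := (Real.log_pow _ _).symm
    _ ≤ Real.log (mayerSeries I z) :=
        Real.log_le_log (by positivity) (h.one_add_pow_floor_le_mayerSeries ha hz)

theorem abs_log_mayerSeries_sub_le (h : HardCoreBounds I L a) (ha : 0 < a) (hz : 0 ≤ z)
    (hza : z * a ≤ 1) : |Real.log (mayerSeries I z) - z * L| ≤ 2 * a * z ^ 2 * L := by
  have hL := h.volume_nonneg
  have hZ := h.one_le_mayerSeries hz
  have hupper : Real.log (mayerSeries I z) ≤ z * L := by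
    simpa using Real.log_le_log (by linarith) (h.mayerSeries_le_exp hz)
  have hlower : z * L - 2 * a * z ^ 2 * L ≤ Real.log (mayerSeries I z) := by
    rcases hL.eq_or_lt with rfl | hL
    · simpa using Real.log_nonneg hZ
    rcases le_or_gt (a * z ^ 2 * L) 1 with hsmall | hlarge
    · linarith [h.sub_le_log_mayerSeries_of_small hL ha.le hz hsmall,
        show 0 ≤ a * z ^ 2 * L by positivity]
    · exact h.sub_le_log_mayerSeries_of_large ha hz hza hlarge
  rw [abs_le]
  constructor <;> linarith [show 0 ≤ a * z ^ 2 * L by positivity]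

end HardCoreBounds

namespace MeasureTheory

theorem integrableOn_of_mem_unitInterval {X : Type*} [MeasurableSpace X] {μ : Measure X}
    {S : Set X} (hS : μ S ≠ ⊤) {f : X → ℝ} (hf : Measurable f)
    (h : ∀ x, f x ∈ unitInterval) : IntegrableOn f S μ :=
  Measure.integrableOn_of_bounded (M := 1) hS hf.aestronglyMeasurable
    (.of_forall fun x => by rw [Real.norm_of_nonneg (h x).1]; exact (h x).2)

section FinCons

variable {X : Type*} [MeasurableSpace X] {μ : Measure X} [SigmaFinite μ] {n : ℕ}
  {F : (Fin (n + 1) → X) → ℝ}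

theorem Integrable.comp_fin_cons_prod (hF : Integrable F (Measure.pi fun _ => μ)) :
    Integrable (fun p : X × (Fin n → X) => F (Fin.cons p.1 p.2))
      (μ.prod (Measure.pi fun _ => μ)) := by
  have hmp := (measurePreserving_piFinSuccAbove (fun _ : Fin (n + 1) => μ) 0).symm
  rw [← hmp.integrable_comp_emb (MeasurableEquiv.measurableEmbedding _)] at hF
  simp only [Function.comp_def, MeasurableEquiv.piFinSuccAbove_symm_apply, Fin.insertNthEquiv,
    Equiv.coe_fn_mk, Fin.insertNth_zero'] at hF
  exact hF

theorem Integrable.integral_fin_cons (hF : Integrable F (Measure.pi fun _ => μ)) :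
    Integrable (fun y => ∫ a, F (Fin.cons a y) ∂μ) (Measure.pi fun _ => μ) :=
  hF.comp_fin_cons_prod.integral_prod_right

theorem integral_fin_succ_eq_integral_integral_cons
    (hF : Integrable F (Measure.pi fun _ => μ)) :
    ∫ x, F x ∂(Measure.pi fun _ => μ) =
      ∫ y, ∫ a, F (Fin.cons a y) ∂μ ∂(Measure.pi fun _ => μ) := by
  have hmp := (measurePreserving_piFinSuccAbove (fun _ : Fin (n + 1) => μ) 0).symm
  rw [← hmp.integral_comp', ← integral_prod_symm _ hF.comp_fin_cons_prod]
  simp only [MeasurableEquiv.piFinSuccAbove_symm_apply, Fin.insertNthEquiv, Equiv.coe_fn_mk,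
    Fin.insertNth_zero']

end FinCons

end MeasureTheory

section Plates

variable {k α : ℝ}

theorem sideLen_pos (hk : 0 < k) (o : Orient) (j : Fin 3) : 0 < sideLen k α o j := by
  unfold sideLen
  split_ifs <;> first | exact one_pos | exact hk | exact Real.rpow_pos_of_pos hk α

theorem sideLen_le (hk : 1 ≤ k) (hα : α ≤ 1) (o : Orient) (j : Fin 3) :
    sideLen k α o j ≤ k := by
  have : k ^ α ≤ k := by simpa using Real.rpow_le_rpow_of_exponent_le hk hα
  unfold sideLen
  split_ifs <;> first | exact hk | exact this | exact le_rfl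

theorem intersects_iff (hk : 0 < k) (p p' : Plate) :
    Intersects k α p p' ↔
      ∀ j, |p.1 j - p'.1 j| ≤ (sideLen k α p.2 j + sideLen k α p'.2 j) / 2 := by
  constructor
  · rintro ⟨y, hy, hy'⟩ j
    linarith [abs_sub_le (p.1 j) (y j) (p'.1 j), abs_sub_comm (p.1 j) (y j), hy j, hy' j]
  · intro h
    refine ⟨fun j => max (p.1 j - sideLen k α p.2 j / 2) (p'.1 j - sideLen k α p'.2 j / 2),
      fun j => ?_, fun j => ?_⟩ <;>
    · have := (sideLen_pos (α := α) hk p.2 j).le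
      have := (sideLen_pos (α := α) hk p'.2 j).le
      have := abs_le.mp (h j)
      rw [abs_le]
      constructor <;> cases max_cases (p.1 j - sideLen k α p.2 j / 2)
        (p'.1 j - sideLen k α p'.2 j / 2) <;> linarith

theorem measurableSet_setOf_intersects (hk : 0 < k) {X : Type*} [MeasurableSpace X]
    {f g : X → Pt} (hf : Measurable f) (hg : Measurable g) (o o' : Orient) :
    MeasurableSet {x | Intersects k α (f x, o) (g x, o')} := by
  simp only [intersects_iff hk, Set.ofPred_forall]
  exact .iInter fun j => measurableSet_le (by fun_prop) measurable_const

theorem measurable_phi2 (hk : 0 < k) {X : Type*} [MeasurableSpace X]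
    {f g : X → Pt} (hf : Measurable f) (hg : Measurable g) (o o' : Orient) :
    Measurable fun x => phi2 k α (f x, o) (g x, o') :=
  Measurable.ite (measurableSet_setOf_intersects hk hf hg o o') measurable_const measurable_const

theorem phi2_mem_unitInterval (p p' : Plate) : phi2 k α p p' ∈ unitInterval := by
  unfold phi2; split_ifs <;> simp

theorem prod_sideLen_add_le (hk : 1 ≤ k) (hα : α ≤ 1) {o o' : Orient} (h : o.1 = o'.1) :
    ∏ j, (sideLen k α o j + sideLen k α o' j) ≤ 8 * k ^ 2 := by
  obtain ⟨i, b⟩ := o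
  obtain ⟨i', b'⟩ := o'
  obtain rfl : i = i' := h
  have hle : ∀ j,
      sideLen k α (i, b) j + sideLen k α (i, b') j ≤ if j = i then 2 else 2 * k := by
    intro j
    split_ifs with hj
    · simp [sideLen, hj]; norm_num
    · linarith [sideLen_le (α := α) hk hα (i, b) j, sideLen_le (α := α) hk hα (i, b') j]
  calc ∏ j, (sideLen k α (i, b) j + sideLen k α (i, b') j)
      ≤ ∏ j : Fin 3, (if j = i then 2 else 2 * k) :=
        prod_le_prod (fun j _ => add_nonneg (sideLen_pos (by linarith) _ j).le
          (sideLen_pos (by linarith) _ j).le) fun j _ => hle j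
    _ = 8 * k ^ 2 := by fin_cases i <;> simp [Fin.prod_univ_three] <;> ring

theorem volume_setOf_intersects_le (hk : 1 < k) (hα : α ≤ 1) {o o' : Orient} (h : o.1 = o'.1)
    (v : Pt) : volume {a : Pt | Intersects k α (a, o) (v, o')} ≤ ENNReal.ofReal (8 * k ^ 2) := by
  set w : Fin 3 → ℝ := fun j => sideLen k α o j + sideLen k α o' j
  have hw : ∀ j, 0 ≤ w j := fun j =>
    add_nonneg (sideLen_pos (by linarith) o j).le (sideLen_pos (by linarith) o' j).le
  have hsub : {a : Pt | Intersects k α (a, o) (v, o')} ⊆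
      Set.univ.pi fun j => Set.Icc (v j - w j / 2) (v j + w j / 2) := by
    intro a ha j _
    have := abs_le.mp ((intersects_iff (by linarith) _ _).mp ha j)
    constructor <;> linarith [this.1, this.2]
  calc volume {a : Pt | Intersects k α (a, o) (v, o')}
      ≤ ∏ j, ENNReal.ofReal (w j) := by
        refine (measure_mono hsub).trans_eq ?_
        rw [volume_pi_pi]
        simp only [Real.volume_Icc]
        ring_nf
    _ = ENNReal.ofReal (∏ j, w j) := (ENNReal.ofReal_prod_of_nonneg fun j _ => hw j).symm
    _ ≤ ENNReal.ofReal (8 * k ^ 2) := ENNReal.ofReal_le_ofReal (prod_sideLen_add_le hk.le hα h)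

theorem integral_one_sub_phi2_le (hk : 1 < k) (hα : α ≤ 1) (S : Set Pt) {o o' : Orient}
    (h : o.1 = o'.1) (v : Pt) : ∫ a in S, (1 - phi2 k α (a, o) (v, o')) ≤ 8 * k ^ 2 := by
  have hmeas : MeasurableSet {a : Pt | Intersects k α (a, o) (v, o')} :=
    measurableSet_setOf_intersects (by linarith) measurable_id measurable_const o o'
  have hind : (fun a : Pt => 1 - phi2 k α (a, o) (v, o')) =
      {a : Pt | Intersects k α (a, o) (v, o')}.indicator 1 := by
    ext a
    by_cases ha : Intersects k α (a, o) (v, o') <;> simp [phi2, ha]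
  rw [hind, integral_indicator_one hmeas, measureReal_def,
    Measure.restrict_apply hmeas]
  exact ENNReal.toReal_le_of_le_ofReal (by positivity)
    ((measure_mono Set.inter_subset_left).trans (volume_setOf_intersects_le hk hα h v))

theorem phiL_mem_unitInterval : ∀ P : List Plate, phiL k α P ∈ unitInterval
  | [] => unitInterval.one_mem
  | p :: P => unitInterval.mul_mem
      (list_prod_mem (S := unitInterval.submonoid) fun _ hx => by
        obtain ⟨p', -, rfl⟩ := List.mem_map.mp hx
        exact phi2_mem_unitInterval p p')
      (phiL_mem_unitInterval P)

theorem phiL_mkConf_cons {n : ℕ} (a : Pt) (y : Fin n → Pt) (u : Orient) (o : Fin n → Orient) :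
    phiL k α (mkConf (Fin.cons a y : Fin (n + 1) → Pt) (Fin.cons u o)) =
      (∏ m, phi2 k α (a, u) (y m, o m)) * phiL k α (mkConf y o) := by
  simp [mkConf, List.ofFn_succ, phiL, List.map_ofFn, List.prod_ofFn, Function.comp_def]

theorem measurable_phiL_mkConf (hk : 0 < k) :
    ∀ {n : ℕ} (o : Fin n → Orient), Measurable fun x : Fin n → Pt => phiL k α (mkConf x o)
  | 0, o => by simp [mkConf, phiL]
  | n + 1, o => by
    have key : ∀ x : Fin (n + 1) → Pt, phiL k α (mkConf x o) =
        (∏ m, phi2 k α (x 0, o 0) (Fin.tail x m, Fin.tail o m)) *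
          phiL k α (mkConf (Fin.tail x) (Fin.tail o)) := fun x => by
      rw [← phiL_mkConf_cons, Fin.cons_self_tail, Fin.cons_self_tail]
    simp only [key]
    refine .mul (Finset.measurable_prod _ fun m _ => measurable_phi2 hk (by fun_prop)
      (by fun_prop) _ _) ((measurable_phiL_mkConf hk _).comp (by fun_prop))

end Plates

noncomputable def orientSum (k α : ℝ) (q : Fin 3) {n : ℕ} (x : Fin n → Pt) : ℝ :=
  ∑ o : Fin n → {a // a ∈ typeOrients q}, phiL k α (mkConf x fun m => (o m).1)

noncomputable def confIntegral (k α : ℝ) (S : Set Pt) (q : Fin 3) (n : ℕ) : ℝ :=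
  ∫ x : Fin n → Pt in Set.univ.pi (fun _ => S), orientSum k α q x

section ConfigurationIntegrals

variable {k α : ℝ} {q : Fin 3} {n : ℕ} {S : Set Pt}

theorem integrableOn_prod_phi2 (hk : 0 < k) (hS : volume S ≠ ⊤) (o : Orient)
    (o' : Fin n → Orient) (y : Fin n → Pt) :
    IntegrableOn (fun a => ∏ m, phi2 k α (a, o) (y m, o' m)) S :=
  integrableOn_of_mem_unitInterval hS
    (Finset.measurable_prod (f := fun m a => phi2 k α (a, o) (y m, o' m)) _
      fun _ _ => measurable_phi2 hk measurable_id measurable_const _ _)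
    fun _ => unitInterval.prod_mem fun _ _ => phi2_mem_unitInterval _ _

theorem ZGen_eq_mayerSeries (z : ℝ) (S : Set Pt) :
    ZGen k α z S (typeOrients q) = mayerSeries (confIntegral k α S q) z := rfl

theorem fst_of_mem_typeOrients (u : {a // a ∈ typeOrients q}) : u.1.1 = q := by
  obtain ⟨u, hu⟩ := u
  simp only [typeOrients, Finset.mem_insert, Finset.mem_singleton] at hu
  rcases hu with rfl | rfl <;> rfl

theorem card_typeOrients : Fintype.card {a // a ∈ typeOrients q} = 2 := by
  rw [Fintype.card_coe, typeOrients, Finset.card_pair (by simp)]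

theorem orientSum_nonneg (x : Fin n → Pt) : 0 ≤ orientSum k α q x :=
  sum_nonneg fun _ _ => (phiL_mem_unitInterval _).1

theorem orientSum_le (x : Fin n → Pt) : orientSum k α q x ≤ 2 ^ n := by
  calc orientSum k α q x ≤ ∑ _o : Fin n → {a // a ∈ typeOrients q}, (1 : ℝ) :=
        sum_le_sum fun _ _ => (phiL_mem_unitInterval _).2
    _ = 2 ^ n := by
        rw [sum_const, card_univ, Fintype.card_fun, card_typeOrients]
        simp

theorem measurable_orientSum (hk : 0 < k) : Measurable (orientSum (n := n) k α q) :=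
  Finset.measurable_sum _ fun _ _ => measurable_phiL_mkConf hk _

theorem orientSum_cons (a : Pt) (y : Fin n → Pt) :
    orientSum k α q (Fin.cons a y : Fin (n + 1) → Pt) =
      ∑ u : {a // a ∈ typeOrients q}, ∑ o : Fin n → {a // a ∈ typeOrients q},
        (∏ m, phi2 k α (a, u.1) (y m, (o m).1)) * phiL k α (mkConf y fun m => (o m).1) := by
  rw [orientSum, ← (Fin.consEquiv fun _ => {a // a ∈ typeOrients q}).sum_comp,
    Fintype.sum_prod_type]
  refine sum_congr rfl fun u _ => sum_congr rfl fun o _ => ?_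
  rw [← phiL_mkConf_cons]
  congr 2
  funext m
  exact Fin.cases rfl (fun m => rfl) m

theorem volume_sub_le_integral_prod_phi2 (hk : 1 < k) (hα : α ≤ 1)
    (hS : Bornology.IsBounded S) {o : Orient} {o' : Fin n → Orient} (h : ∀ m, o.1 = (o' m).1)
    (y : Fin n → Pt) :
    (volume S).toReal - 8 * k ^ 2 * n ≤ ∫ a in S, ∏ m, phi2 k α (a, o) (y m, o' m) := by
  have : IsFiniteMeasure (volume.restrict S) := isFiniteMeasure_restrict.mpr hS.measure_lt_top.ne
  have hint : ∀ m, IntegrableOn (fun a => 1 - phi2 k α (a, o) (y m, o' m)) S :=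
    fun m => integrableOn_of_mem_unitInterval hS.measure_lt_top.ne
      ((measurable_phi2 (by linarith) measurable_id measurable_const _ _).const_sub 1)
      fun a => Set.Icc.mem_iff_one_sub_mem.mp (phi2_mem_unitInterval _ _)
  calc (volume S).toReal - 8 * k ^ 2 * n
      ≤ ∫ a in S, (1 - ∑ m, (1 - phi2 k α (a, o) (y m, o' m))) := by
        rw [integral_sub (integrable_const 1) (integrable_finsetSum _ fun m _ => hint m),
          integral_finsetSum _ fun m _ => hint m, setIntegral_const, smul_eq_mul, mul_one,
          measureReal_def]
        have := sum_le_sum fun m (_ : m ∈ univ) => integral_one_sub_phi2_le hk hα S (h m) (y m)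
        simp only [sum_const, card_univ, Fintype.card_fin, nsmul_eq_mul] at this
        linarith
    _ ≤ ∫ a in S, ∏ m, phi2 k α (a, o) (y m, o' m) :=
        integral_mono (integrable_const 1 |>.sub (integrable_finsetSum _ fun m _ => hint m))
          (integrableOn_prod_phi2 (by linarith) hS.measure_lt_top.ne o o' y)
          fun a => one_sub_sum_one_sub_le_prod _ (fun m _ => (phi2_mem_unitInterval _ _).1)
            (fun m _ => (phi2_mem_unitInterval _ _).2)

theorem two_mul_sub_mul_orientSum_le (hk : 1 < k) (hα : α ≤ 1)
    (hS : Bornology.IsBounded S) (y : Fin n → Pt) :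
    (2 * (volume S).toReal - 16 * k ^ 2 * n) * orientSum k α q y ≤
      ∫ a in S, orientSum k α q (Fin.cons a y : Fin (n + 1) → Pt) := by
  have hint : ∀ (u : {a // a ∈ typeOrients q}) (o : Fin n → {a // a ∈ typeOrients q}),
      IntegrableOn (fun a => (∏ m, phi2 k α (a, u.1) (y m, (o m).1)) *
        phiL k α (mkConf y fun m => (o m).1)) S :=
    fun u o => (integrableOn_prod_phi2 (by linarith) hS.measure_lt_top.ne _ _ y).mul_const _
  calc (2 * (volume S).toReal - 16 * k ^ 2 * n) * orientSum k α q y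
      = ∑ _u : {a // a ∈ typeOrients q}, ∑ o : Fin n → {a // a ∈ typeOrients q},
          ((volume S).toReal - 8 * k ^ 2 * n) * phiL k α (mkConf y fun m => (o m).1) := by
        simp only [orientSum, ← mul_sum, sum_const, card_univ, card_typeOrients, nsmul_eq_mul]
        ring
    _ ≤ ∑ u : {a // a ∈ typeOrients q}, ∑ o : Fin n → {a // a ∈ typeOrients q},
          (∫ a in S, ∏ m, phi2 k α (a, u.1) (y m, (o m).1)) *
            phiL k α (mkConf y fun m => (o m).1) := by
        gcongr with u _ o _
        · exact (phiL_mem_unitInterval _).1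
        · exact volume_sub_le_integral_prod_phi2 hk hα hS
            (fun m => by rw [fst_of_mem_typeOrients, fst_of_mem_typeOrients]) y
    _ = ∫ a in S, orientSum k α q (Fin.cons a y : Fin (n + 1) → Pt) := by
        simp only [orientSum_cons]
        rw [integral_finsetSum _ fun u _ => integrable_finsetSum _ fun o _ => hint u o]
        refine sum_congr rfl fun u _ => ?_
        rw [integral_finsetSum _ fun o _ => hint u o]
        simp only [integral_mul_const]

theorem confIntegral_eq_integral_pi (n : ℕ) :
    confIntegral k α S q n =
      ∫ x, orientSum k α q x ∂(Measure.pi fun _ : Fin n => volume.restrict S) := by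
  rw [confIntegral, ← Measure.restrict_pi_pi]
  rfl

theorem integrable_orientSum (hk : 0 < k) (μ : Measure Pt) [IsFiniteMeasure μ] :
    Integrable (orientSum k α q) (Measure.pi fun _ : Fin n => μ) :=
  .of_bound (measurable_orientSum hk).aestronglyMeasurable (2 ^ n)
    (.of_forall fun x => by rw [Real.norm_of_nonneg (orientSum_nonneg x)]; exact orientSum_le x)

theorem confIntegral_zero : confIntegral k α S q 0 = 1 := by
  simp [confIntegral, orientSum, mkConf, phiL, measureReal_def, volume_pi_pi]

theorem confIntegral_le (hk : 0 < k) (hS : Bornology.IsBounded S) (n : ℕ) :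
    confIntegral k α S q n ≤ (2 * (volume S).toReal) ^ n := by
  have : IsFiniteMeasure (volume.restrict S) := isFiniteMeasure_restrict.mpr hS.measure_lt_top.ne
  calc confIntegral k α S q n
        ≤ ∫ _x, (2 : ℝ) ^ n ∂(Measure.pi fun _ : Fin n => volume.restrict S) := by
        rw [confIntegral_eq_integral_pi]
        exact integral_mono (integrable_orientSum hk _) (integrable_const _) orientSum_le
    _ = (2 * (volume S).toReal) ^ n := by
        simp [measureReal_def, Measure.pi_univ, mul_pow, mul_comm]

theorem confIntegral_succ_ge (hk : 1 < k) (hα : α ≤ 1) (hS : Bornology.IsBounded S) (n : ℕ) :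
    (2 * (volume S).toReal - 16 * k ^ 2 * n) * confIntegral k α S q n ≤
      confIntegral k α S q (n + 1) := by
  have : IsFiniteMeasure (volume.restrict S) := isFiniteMeasure_restrict.mpr hS.measure_lt_top.ne
  have hk0 : 0 < k := by linarith
  have hF := integrable_orientSum (α := α) (q := q) (n := n + 1) hk0 (volume.restrict S)
  rw [confIntegral_eq_integral_pi, confIntegral_eq_integral_pi,
    integral_fin_succ_eq_integral_integral_cons hF, ← integral_const_mul]
  exact integral_mono ((integrable_orientSum hk0 _).const_mul _) hF.integral_fin_cons
    fun y => two_mul_sub_mul_orientSum_le hk hα hS y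

theorem hardCoreBounds_confIntegral (hk : 1 < k) (hα : α ≤ 1) (hS : Bornology.IsBounded S)
    (q : Fin 3) :
    HardCoreBounds (confIntegral k α S q) (2 * (volume S).toReal) (16 * k ^ 2) where
  zero := confIntegral_zero
  nonneg _ := integral_nonneg orientSum_nonneg
  le_pow := confIntegral_le (by linarith) hS
  step := confIntegral_succ_ge hk hα hS

end ConfigurationIntegrals

/-- **Mayer expansion, single type.**  There are constants `c, C > 0` such that
if `z k² ≤ c` then, for every bounded measurable `S` and every type `q`, the
single-type partition function `Z^q(S)` is positive and
`log Z^q(S) = 2|S| z (1 + O(z k²))`. -/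
theorem mayer_single_type :
    ∃ c C : ℝ, 0 < c ∧ 0 < C ∧
      ∀ k α z : ℝ, 1 < k → α ∈ Set.Ioc (3/4 : ℝ) 1 → 0 < z → z * k ^ 2 ≤ c →
        ∀ S : Set Pt, Bornology.IsBounded S → MeasurableSet S → ∀ q : Fin 3,
          0 < ZGen k α z S (typeOrients q) ∧
          |Real.log (ZGen k α z S (typeOrients q)) - 2 * z * (volume S).toReal| ≤
            C * z ^ 2 * k ^ 2 * (volume S).toReal := by
  refine ⟨1 / 16, 64, by norm_num, by norm_num, ?_⟩
  intro k α z hk hα hz hzk S hS _ q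
  have h := hardCoreBounds_confIntegral hk hα.2 hS q
  rw [ZGen_eq_mayerSeries]
  refine ⟨zero_lt_one.trans_le (h.one_le_mayerSeries hz.le), ?_⟩
  convert h.abs_log_mayerSeries_sub_le (by positivity) hz.le (by linarith) using 1
  · ring_nf
  · ring
end

section
/- (Pebble type exclusivity) Let k≥1 and α∈(0,1]. If p=(x,o) and p'=(y,o') are two plates whose types are different (o is of type i, o' is of type i', i≠i'), and if |x_j − y_j| ≤ k^α/2 for each coordinate j∈{1,2,3} (in particular, if x and y lie in a common axis-aligned cube of side k^α/2), then the supports intersect: R_p ∩ R_{p'} ≠ ∅. Consequently, in any configuration of pairwise non-intersecting plates, all plates whose centers lie in a common cube of side k^α/2 have the same type. -/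
open MeasureTheory Filter

attribute [local instance] Classical.propDecidable

/-!
Along an axis `j`, a plate whose type is not `j` has side `k^α` or `k`, hence at least `k^α`
because `k^α ≤ k`. Two plates of different types cannot both have their unit side along the
same axis, so along every axis their half-sides add up to at least `k^α/2`, which bounds the
distance of the centers; axis-aligned boxes whose projections overlap on every axis intersect.
-/

theorem exists_abs_sub_le_and_abs_sub_le {a b r r' : ℝ} (hr : 0 ≤ r) (hr' : 0 ≤ r')
    (h : |a - b| ≤ r + r') : ∃ z, |z - a| ≤ r ∧ |z - b| ≤ r' := by
  obtain ⟨hab, hba⟩ := abs_le.1 h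
  rcases le_total (a - r) (b - r') with hle | hle
  · exact ⟨b - r', abs_le.2 ⟨by linarith, by linarith⟩, abs_le.2 ⟨by linarith, by linarith⟩⟩
  · exact ⟨a - r, abs_le.2 ⟨by linarith, by linarith⟩, abs_le.2 ⟨by linarith, by linarith⟩⟩

section PlateGeometry

variable {k α : ℝ}

theorem sideLen_nonneg (hk : 0 ≤ k) (o : Orient) (j : Fin 3) : 0 ≤ sideLen k α o j := by
  have := Real.rpow_nonneg hk α
  unfold sideLen
  split_ifs <;> linarith

theorem rpow_le_sideLen_of_ne (hkα : k ^ α ≤ k) {o : Orient} {j : Fin 3} (hj : j ≠ o.1) :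
    k ^ α ≤ sideLen k α o j := by
  unfold sideLen
  split_ifs <;> first | contradiction | linarith

theorem rpow_le_sideLen_add_sideLen (hk : 0 ≤ k) (hkα : k ^ α ≤ k) {o o' : Orient}
    (h : o.1 ≠ o'.1) (j : Fin 3) : k ^ α ≤ sideLen k α o j + sideLen k α o' j := by
  rcases eq_or_ne j o.1 with rfl | hj
  · linarith [sideLen_nonneg (α := α) hk o o.1, rpow_le_sideLen_of_ne hkα h (o := o')]
  · linarith [rpow_le_sideLen_of_ne hkα hj, sideLen_nonneg (α := α) hk o' j]

theorem intersects_of_forall_abs_sub_le (hk : 0 ≤ k) {p p' : Plate}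
    (h : ∀ j, |p.1 j - p'.1 j| ≤ sideLen k α p.2 j / 2 + sideLen k α p'.2 j / 2) :
    Intersects k α p p' := by
  choose z hz using fun j => exists_abs_sub_le_and_abs_sub_le
    (div_nonneg (sideLen_nonneg hk p.2 j) zero_le_two)
    (div_nonneg (sideLen_nonneg hk p'.2 j) zero_le_two) (h j)
  exact ⟨z, fun j => (hz j).1, fun j => (hz j).2⟩

theorem intersects_of_type_ne (hk : 0 ≤ k) (hkα : k ^ α ≤ k) {p p' : Plate}
    (h : p.2.1 ≠ p'.2.1) (hd : ∀ j, |p.1 j - p'.1 j| ≤ k ^ α / 2) : Intersects k α p p' :=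
  intersects_of_forall_abs_sub_le hk fun j => by
    linarith [hd j, rpow_le_sideLen_add_sideLen hk hkα h j]

theorem abs_sub_le_of_mem_cube {c x y : Pt} {s : ℝ} (hx : x ∈ cube c s) (hy : y ∈ cube c s)
    (j : Fin 3) : |x j - y j| ≤ s := by
  have hxj : |x j - c j| ≤ s / 2 := hx j
  have hyj : |y j - c j| ≤ s / 2 := hy j
  calc |x j - y j| ≤ |x j - c j| + |c j - y j| := abs_sub_le _ _ _
    _ ≤ s := by rw [abs_sub_comm (c j)]; linarith

theorem type_eq_of_mem_cube (hk : 0 ≤ k) (hkα : k ^ α ≤ k) {p p' : Plate}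
    (h : ¬ Intersects k α p p') {c : Pt} (hp : p.1 ∈ cube c (k ^ α / 2))
    (hp' : p'.1 ∈ cube c (k ^ α / 2)) : p.2.1 = p'.2.1 := by
  by_contra hne
  exact h (intersects_of_type_ne hk hkα hne (abs_sub_le_of_mem_cube hp hp'))

end PlateGeometry

/-- **Pebble type exclusivity.**  For `k ≥ 1` and `α ∈ (0,1]`: two plates of
different types whose centers are within `k^α/2` of each other in every
coordinate have intersecting supports.  Consequently, in a configuration of
pairwise non-intersecting plates, all plates whose centers lie in a common
axis-aligned cube of side `k^α/2` have the same type. -/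
theorem pebble_type_exclusivity :
    ∀ k α : ℝ, 1 ≤ k → α ∈ Set.Ioc (0 : ℝ) 1 →
      (∀ p p' : Plate, p.2.1 ≠ p'.2.1 →
        (∀ j, |p.1 j - p'.1 j| ≤ k ^ α / 2) →
        (plSupport k α p ∩ plSupport k α p').Nonempty) ∧
      (∀ P : Finset Plate, (∀ p ∈ P, ∀ p' ∈ P, p ≠ p' → ¬ Intersects k α p p') →
        ∀ c : Pt, ∀ p ∈ P, ∀ p' ∈ P,
          p.1 ∈ cube c (k ^ α / 2) → p'.1 ∈ cube c (k ^ α / 2) → p.2.1 = p'.2.1) := by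
  intro k α hk hα
  have hk0 : 0 ≤ k := zero_le_one.trans hk
  have hkα : k ^ α ≤ k := Real.rpow_le_self_of_one_le hk hα.2
  refine ⟨fun p p' => intersects_of_type_ne hk0 hkα, fun P hP c p hp p' hp' hpc hp'c => ?_⟩
  by_cases hpp' : p = p'
  · rw [hpp']
  · exact type_eq_of_mem_cube hk0 hkα (hP p hp p' hp' hpp') hpc hp'c
end
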